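/- arXiv:1403.4955 — 5 statements merged into one kernel-verified Lean document; each statement's English description precedes it below -/
import Mathlib

section
/- Let r > 0 and let f be holomorphic on the punctured disk {ζ ∈ ℂ : 0 < |ζ| < r} such that there exist n ∈ ℕ and C > 0 with |f(ζ)| ≤ C/|ζ|^n for all ζ in the punctured disk. If for every q ∈ ℕ there exist c_q > 0 and η_q > 0 such that |f(ξ)| ≤ c_q · ξ^q for all real ξ with 0 < ξ < η_q, then f is identically zero on the punctured disk. -/
/-!
Since `‖f z‖ ≤ C / ‖z‖ ^ n`, the function `z ^ n * f z` is bounded on the punctured disk, so by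
Riemann's removable singularity theorem it extends to a function `G` analytic on the whole disk.
Along the positive reals `G` still decays faster than any power. If `G` had finite order `m`
at `0`, we could write `G z = z ^ m * h z` with `h 0 ≠ 0`; decay like `ξ ^ (m + 1)` forces
`h ξ → 0`, a contradiction. Hence `G` vanishes near `0`, and by the identity theorem on the
whole disk.
-/

open Complex Set Filter Topology Asymptotics Metric

theorem AnalyticAt.analyticOrderAt_eq_top_of_forall_isBigO {𝕜 E : Type*}
    [NontriviallyNormedField 𝕜] [NormedAddCommGroup E] [NormedSpace 𝕜 E] {f : 𝕜 → E} {z₀ : 𝕜}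
    {l : Filter 𝕜} [l.NeBot] (hl : l ≤ 𝓝[≠] z₀) (hf : AnalyticAt 𝕜 f z₀)
    (hdecay : ∀ q : ℕ, f =O[l] fun z => (z - z₀) ^ q) : analyticOrderAt f z₀ = ⊤ := by
  by_contra hfin
  obtain ⟨m, hm⟩ := WithTop.ne_top_iff_exists.mp hfin
  obtain ⟨g, hg, hg₀, hfg⟩ := hf.analyticOrderAt_eq_natCast.mp hm.symm
  have hl' : l ≤ 𝓝 z₀ := hl.trans nhdsWithin_le_nhds
  have hne : ∀ᶠ z in l, z - z₀ ≠ 0 := by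
    filter_upwards [hl self_mem_nhdsWithin] with z hz using sub_ne_zero.mpr hz
  have hg_eq : g =ᶠ[l] fun z => ((z - z₀) ^ m)⁻¹ • f z := by
    filter_upwards [hl' hfg, hne] with z hz hz₀
    rw [hz, smul_smul, inv_mul_cancel₀ (pow_ne_zero _ hz₀), one_smul]
  have hpow : (fun z => ((z - z₀) ^ m)⁻¹ * (z - z₀) ^ (m + 1)) =ᶠ[l] fun z => z - z₀ := by
    filter_upwards [hne] with z hz₀
    rw [pow_succ, ← mul_assoc, inv_mul_cancel₀ (pow_ne_zero _ hz₀), one_mul]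
  have hgO : g =O[l] fun z => z - z₀ :=
    hg_eq.trans_isBigO (((isBigO_refl _ _).smul (hdecay (m + 1))).trans_eventuallyEq hpow)
  have hg_zero : Tendsto g l (𝓝 0) :=
    hgO.trans_tendsto (tendsto_sub_nhds_zero_iff.mpr (tendsto_id.mono_left hl'))
  exact hg₀ (tendsto_nhds_unique (hg.continuousAt.tendsto.mono_left hl') hg_zero)

theorem tendsto_ofReal_nhdsGT_zero : Tendsto ((↑) : ℝ → ℂ) (𝓝[>] 0) (𝓝[≠] 0) :=
  tendsto_nhdsWithin_of_tendsto_nhds_of_eventually_within _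
    (continuous_ofReal.tendsto' 0 0 ofReal_zero |>.mono_left nhdsWithin_le_nhds)
    (by filter_upwards [self_mem_nhdsWithin] with ξ hξ using ofReal_ne_zero.mpr hξ.ne')

theorem isBigO_map_ofReal_nhdsGT_zero_pow {E : Type*} [Norm E] {f : ℂ → E} {c η : ℝ} {q : ℕ}
    (hη : 0 < η) (hf : ∀ ξ : ℝ, 0 < ξ → ξ < η → ‖f ξ‖ ≤ c * ξ ^ q) :
    f =O[map (↑) (𝓝[>] (0 : ℝ))] fun z => z ^ q := by
  rw [isBigO_map]
  refine .of_bound c ?_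
  filter_upwards [Ioo_mem_nhdsGT hη] with ξ hξ
  simpa [abs_of_pos hξ.1] using hf ξ hξ.1 hξ.2

theorem setOf_norm_pos_and_norm_lt_eq_ball_diff_zero {E : Type*} [NormedAddCommGroup E] (r : ℝ) :
    {x : E | 0 < ‖x‖ ∧ ‖x‖ < r} = ball 0 r \ {0} := by
  ext z
  simp [norm_pos_iff, and_comm]

theorem exists_analyticOnNhd_eqOn_pow_mul_of_norm_le_div_pow {f : ℂ → ℂ} {r C : ℝ} {n : ℕ}
    (hr : 0 < r) (hf : DifferentiableOn ℂ f (ball 0 r \ {0}))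
    (hbound : ∀ z ∈ ball 0 r \ {0}, ‖f z‖ ≤ C / ‖z‖ ^ n) :
    ∃ G : ℂ → ℂ, AnalyticOnNhd ℂ G (ball 0 r) ∧ EqOn G (fun z => z ^ n * f z) (ball 0 r \ {0}) := by
  have hbdd : BddAbove (norm ∘ (fun z => z ^ n * f z) '' (ball 0 r \ {0})) := by
    refine ⟨C, forall_mem_image.mpr fun z hz => ?_⟩
    have hz₀ : 0 < ‖z‖ := norm_pos_iff.mpr hz.2
    calc ‖z ^ n * f z‖ = ‖z‖ ^ n * ‖f z‖ := by rw [norm_mul, norm_pow]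
      _ ≤ C := (le_div_iff₀' (pow_pos hz₀ n)).mp (hbound z hz)
  refine ⟨_, (differentiableOn_update_limUnder_of_bddAbove (ball_mem_nhds 0 hr)
    ((differentiableOn_pow n).mul hf) hbdd).analyticOnNhd isOpen_ball, fun z hz => ?_⟩
  exact Function.update_of_ne hz.2 _ _

theorem stmt0_general (r : ℝ) (hr : 0 < r) (f : ℂ → ℂ)
    (hf : DifferentiableOn ℂ f {ζ : ℂ | 0 < ‖ζ‖ ∧ ‖ζ‖ < r})
    (n : ℕ) (C : ℝ)
    (hbound : ∀ ζ : ℂ, 0 < ‖ζ‖ → ‖ζ‖ < r →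
      ‖f ζ‖ ≤ C / ‖ζ‖ ^ n)
    (hdecay : ∀ q : ℕ, ∃ c > 0, ∃ η > 0, ∀ ξ : ℝ, 0 < ξ → ξ < η →
      ‖f ξ‖ ≤ c * ξ ^ q) :
    ∀ ζ : ℂ, 0 < ‖ζ‖ → ‖ζ‖ < r → f ζ = 0 := by
  simp only [setOf_norm_pos_and_norm_lt_eq_ball_diff_zero] at hf
  obtain ⟨G, hG, hGf⟩ := exists_analyticOnNhd_eqOn_pow_mul_of_norm_le_div_pow hr hf
    fun z hz ↦ hbound z (norm_pos_iff.mpr hz.2) (mem_ball_zero_iff.mp hz.1)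
  let l := map ((↑) : ℝ → ℂ) (𝓝[>] 0)
  have hl : l ≤ 𝓝[≠] 0 := tendsto_ofReal_nhdsGT_zero
  have hG_decay : ∀ q : ℕ, G =O[l] fun z => (z - 0) ^ q := by
    intro q
    obtain ⟨c, -, η, hη, hc⟩ := hdecay q
    have hGf_l : G =ᶠ[l] fun z => z ^ n * f z :=
      Eventually.mono (hl (sdiff_mem_nhdsWithin_compl (ball_mem_nhds 0 hr) _)) hGf
    have hpow : (fun z : ℂ => z ^ n) =O[l] fun _ => (1 : ℂ) :=
      ((continuous_pow n).tendsto 0).mono_left (hl.trans nhdsWithin_le_nhds) |>.isBigO_one ℂ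
    simpa using hGf_l.trans_isBigO (hpow.mul (isBigO_map_ofReal_nhdsGT_zero_pow hη hc))
  have hG_zero : EqOn G 0 (ball 0 r) :=
    hG.eqOn_zero_of_preconnected_of_eventuallyEq_zero (convex_ball 0 r).isPreconnected
      (mem_ball_self hr) <| analyticOrderAt_eq_top.mp <|
        (hG 0 (mem_ball_self hr)).analyticOrderAt_eq_top_of_forall_isBigO hl hG_decay
  intro ζ hζ₀ hζr
  have hζ : ζ ∈ ball 0 r \ {0} := ⟨mem_ball_zero_iff.mpr hζr, norm_pos_iff.mp hζ₀⟩
  have hfζ : ζ ^ n * f ζ = 0 := (hGf hζ).symm.trans (hG_zero hζ.1)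
  exact (mul_eq_zero.mp hfζ).resolve_left (pow_ne_zero _ hζ.2)

theorem stmt0 (r : ℝ) (hr : 0 < r) (f : ℂ → ℂ)
    (hf : DifferentiableOn ℂ f {ζ : ℂ | 0 < ‖ζ‖ ∧ ‖ζ‖ < r})
    (n : ℕ) (C : ℝ) (hC : 0 < C)
    (hbound : ∀ ζ : ℂ, 0 < ‖ζ‖ → ‖ζ‖ < r →
      ‖f ζ‖ ≤ C / ‖ζ‖ ^ n)
    (hdecay : ∀ q : ℕ, ∃ c > 0, ∃ η > 0, ∀ ξ : ℝ, 0 < ξ → ξ < η →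
      ‖f ξ‖ ≤ c * ξ ^ q) :
    ∀ ζ : ℂ, 0 < ‖ζ‖ → ‖ζ‖ < r → f ζ = 0 :=
  stmt0_general r hr f hf n C hbound hdecay
end

section
/- Let r > 0, n ∈ ℕ, M > 0, and let f be holomorphic on the punctured disk {ζ ∈ ℂ : 0 < |ζ| < r} with |f(ζ)| ≤ M/|ζ|^n there. Suppose q ≥ n and there exist C > 0, η > 0 such that |f(ξ)| ≤ C · ξ^q for all real ξ ∈ (0, η). Then for all ζ with 0 < |ζ| ≤ r/2 one has |f(ζ)| ≤ 2M · |ζ/r|^q / |ζ|^n. -/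
open Complex Set Filter Metric Function

open scoped Topology NNReal ENNReal Real

/-! Since `‖ζ ^ n * f ζ‖ ≤ M` on the punctured disc, `ζ ^ n * f ζ` extends to a holomorphic `F` on
the disc of radius `r`, and Cauchy's inequalities bound its Taylor coefficients by
`‖a_i‖ ≤ M / r ^ i`. Along the positive real axis `F` decays like `ξ ^ (q + n)`, which forces
`a_i = 0` for `i < q`. With `x = ‖ζ‖ / r ≤ 1 / 2` the remaining tail is then at most
`M x ^ q (1 + x + x ^ 2 + ⋯) ≤ 2 M x ^ q`. -/

section Geometric

variable {𝕜 E : Type*} [NontriviallyNormedField 𝕜] [NormedAddCommGroup E] [NormedSpace 𝕜 E]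

theorem HasSum.norm_le_geometric_of_apply_eq_zero {a : ℕ → E} {s : E} {z : 𝕜} {r M : ℝ} {q : ℕ}
    (hs : HasSum (fun i ↦ z ^ i • a i) s) (hq : ∀ k < q, a k = 0)
    (ha : ∀ i, ‖a i‖ ≤ M / r ^ i) (hzr : ‖z‖ < r) :
    ‖s‖ ≤ M * (‖z‖ / r) ^ q / (1 - ‖z‖ / r) := by
  set x := ‖z‖ / r
  have hr : 0 < r := (norm_nonneg z).trans_lt hzr
  obtain ⟨t, hst, ht⟩ := hs.exists_hasSum_smul_of_apply_eq_zero hq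
  have hterm : ∀ m, ‖z ^ m • a (m + q)‖ ≤ M / r ^ q * x ^ m := fun m ↦ by
    calc ‖z ^ m • a (m + q)‖ ≤ ‖z‖ ^ m * (M / r ^ (m + q)) := by
          rw [norm_smul, norm_pow]
          gcongr
          exact ha _
      _ = M / r ^ q * x ^ m := by
          rw [div_pow, pow_add]
          field_simp
  have hgeom : HasSum (fun m ↦ M / r ^ q * x ^ m) (M / r ^ q * (1 - x)⁻¹) :=
    (hasSum_geometric_of_lt_one (by positivity) ((div_lt_one hr).2 hzr)).mul_left _
  calc ‖s‖ = ‖z‖ ^ q * ‖t‖ := by rw [← hst, norm_smul, norm_pow]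
    _ ≤ ‖z‖ ^ q * (M / r ^ q * (1 - x)⁻¹) := by gcongr; exact ht.norm_le_of_bounded hgeom hterm
    _ = M * x ^ q / (1 - x) := by rw [div_pow]; field_simp

end Geometric

section Holomorphic

variable {E : Type*} [NormedAddCommGroup E] [NormedSpace ℂ E]

theorem exists_differentiableOn_ball_eq_of_norm_le [CompleteSpace E] {g : ℂ → E} {c : ℂ}
    {r M : ℝ} (hr : 0 < r) (hg : DifferentiableOn ℂ g (ball c r \ {c}))
    (hM : ∀ z ∈ ball c r \ {c}, ‖g z‖ ≤ M) :
    ∃ F : ℂ → E, DifferentiableOn ℂ F (ball c r) ∧ (∀ z ∈ ball c r, ‖F z‖ ≤ M) ∧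
      ∀ z, z ≠ c → F z = g z := by
  set F := update g c (limUnder (𝓝[≠] c) g)
  have hFg : ∀ z, z ≠ c → F z = g z := fun z hz ↦ update_of_ne hz _ _
  have hFd : DifferentiableOn ℂ F (ball c r) :=
    differentiableOn_update_limUnder_of_bddAbove (ball_mem_nhds c hr) hg
      ⟨M, forall_mem_image.2 hM⟩
  refine ⟨F, hFd, fun z hz ↦ ?_, hFg⟩
  rcases eq_or_ne z c with rfl | hzc
  · have hFlim : Tendsto F (𝓝[≠] z) (𝓝 (F z)) :=
      (hFd.continuousOn.continuousAt (ball_mem_nhds z hr)).tendsto.mono_left nhdsWithin_le_nhds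
    refine le_of_tendsto hFlim.norm ?_
    filter_upwards [inter_mem_nhdsWithin {z}ᶜ (ball_mem_nhds z hr)] with w ⟨hwz, hwr⟩
    rw [hFg w hwz]
    exact hM w ⟨hwr, hwz⟩
  · rw [hFg z hzc]
    exact hM z ⟨hz, hzc⟩

theorem norm_cauchyPowerSeries_le_of_forall_mem_sphere_norm_le {f : ℂ → E} {c : ℂ} {R M : ℝ}
    (hR : 0 < R) (hM : ∀ z ∈ sphere c R, ‖f z‖ ≤ M) (n : ℕ) :
    ‖cauchyPowerSeries f c R n‖ ≤ M / R ^ n := by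
  have hbound : ∀ z ∈ sphere c R, ‖(z - c)⁻¹ ^ n • (z - c)⁻¹ • f z‖ ≤ M / R ^ (n + 1) := by
    intro z hz
    rw [norm_smul, norm_smul, norm_pow, norm_inv, mem_sphere_iff_norm.1 hz, ← mul_assoc,
      ← pow_succ, inv_pow, inv_mul_eq_div]
    gcongr
    exact hM z hz
  calc ‖cauchyPowerSeries f c R n‖
      = ‖(2 * π * I : ℂ)⁻¹ • ∮ z in C(c, R), (z - c)⁻¹ ^ n • (z - c)⁻¹ • f z‖ := by
        simp only [cauchyPowerSeries, ContinuousMultilinearMap.norm_mkPiRing]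
    _ ≤ R * (M / R ^ (n + 1)) :=
        circleIntegral.norm_two_pi_i_inv_smul_integral_le_of_norm_le_const hR.le hbound
    _ = M / R ^ n := by
        field_simp
        ring

theorem HasFPowerSeriesAt.norm_coeff_le_of_forall_norm_le [CompleteSpace E] {F : ℂ → E}
    {p : FormalMultilinearSeries ℂ ℂ E} {c : ℂ} {r M : ℝ} (hp : HasFPowerSeriesAt F p c)
    (hr : 0 < r) (hF : DifferentiableOn ℂ F (ball c r)) (hM : ∀ z ∈ ball c r, ‖F z‖ ≤ M)
    (i : ℕ) : ‖p.coeff i‖ ≤ M / r ^ i := by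
  have hR : ∀ R ∈ Ioo 0 r, ‖p.coeff i‖ ≤ M / R ^ i := by
    rintro R ⟨hR0, hRr⟩
    lift R to ℝ≥0 using hR0.le
    have hpR : HasFPowerSeriesOnBall F (cauchyPowerSeries F c R) c R :=
      (hF.mono (closedBall_subset_ball hRr)).hasFPowerSeriesOnBall (by exact_mod_cast hR0)
    rw [← p.norm_apply_eq_norm_coef, hp.eq_formalMultilinearSeries hpR.hasFPowerSeriesAt]
    exact norm_cauchyPowerSeries_le_of_forall_mem_sphere_norm_le hR0
      (fun z hz ↦ hM z (sphere_subset_ball hRr hz)) i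
  have hlim : Tendsto (fun R : ℝ ↦ M / R ^ i) (𝓝[<] r) (𝓝 (M / r ^ i)) :=
    (continuousAt_const.div (continuous_pow i).continuousAt (pow_ne_zero i hr.ne')).tendsto
      |>.mono_left nhdsWithin_le_nhds
  exact ge_of_tendsto hlim (eventually_of_mem (Ioo_mem_nhdsLT hr) hR)

theorem DifferentiableOn.hasSum_coeff_of_mem_ball [CompleteSpace E] {F : ℂ → E}
    {p : FormalMultilinearSeries ℂ ℂ E} {c z : ℂ} {r : ℝ} (hF : DifferentiableOn ℂ F (ball c r))
    (hp : HasFPowerSeriesAt F p c) (hz : z ∈ ball c r) :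
    HasSum (fun i ↦ (z - c) ^ i • p.coeff i) (F z) := by
  rw [mem_ball_iff_norm] at hz
  have hz0 := norm_nonneg (z - c)
  set ρ : ℝ≥0 := ((‖z - c‖ + r) / 2).toNNReal
  have hρ : (ρ : ℝ) = (‖z - c‖ + r) / 2 := Real.coe_toNNReal _ (by linarith)
  have hpρ : HasFPowerSeriesOnBall F (cauchyPowerSeries F c ρ) c ρ :=
    (hF.mono (closedBall_subset_ball (by linarith))).hasFPowerSeriesOnBall
      (by rw [← NNReal.coe_pos, hρ]; linarith)
  rw [hp.eq_formalMultilinearSeries hpρ.hasFPowerSeriesAt]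
  have hzρ : z - c ∈ eball (0 : ℂ) ρ := by
    rw [mem_eball_zero_iff, enorm_eq_nnnorm, ENNReal.coe_lt_coe, ← NNReal.coe_lt_coe, coe_nnnorm,
      hρ]
    linarith
  simpa only [add_sub_cancel, FormalMultilinearSeries.apply_eq_pow_smul_coeff] using
    hpρ.hasSum hzρ

theorem HasFPowerSeriesAt.coeff_eq_zero_of_eventually_norm_le {F : ℂ → E}
    {p : FormalMultilinearSeries ℂ ℂ E} {C : ℝ} {k j : ℕ} (hp : HasFPowerSeriesAt F p 0)
    (hF : ∀ᶠ ξ : ℝ in 𝓝[>] 0, ‖F ξ‖ ≤ C * ξ ^ k) (hj : j < k) : p.coeff j = 0 := by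
  rcases eq_or_ne p 0 with rfl | hp0
  · simp [FormalMultilinearSeries.coeff]
  suffices hk : k ≤ p.order from
    p.coeff_eq_zero.2 (p.apply_eq_zero_of_lt_order (hj.trans_le hk))
  by_contra! hd
  -- `F ξ = ξ ^ p.order • G ξ` with `G 0 ≠ 0`, while the decay forces `G ξ → 0`.
  set G := (swap dslope (0 : ℂ))^[p.order] F
  have hreal : Tendsto (fun ξ : ℝ ↦ (ξ : ℂ)) (𝓝[>] 0) (𝓝 0) :=
    (continuous_ofReal.tendsto' 0 0 ofReal_zero).mono_left nhdsWithin_le_nhds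
  have hGle : ∀ᶠ ξ : ℝ in 𝓝[>] 0, ‖G ξ‖ ≤ C * ξ ^ (k - p.order) := by
    filter_upwards [hF, self_mem_nhdsWithin] with ξ hξ (hξ0 : 0 < ξ)
    rw [hp.eq_pow_order_mul_iterate_dslope, sub_zero, norm_smul, norm_pow, norm_real,
      Real.norm_of_nonneg hξ0.le] at hξ
    rw [pow_sub₀ _ hξ0.ne' hd.le, ← div_eq_mul_inv, ← mul_div_assoc, le_div_iff₀ (by positivity)]
    linarith
  have hGlim : Tendsto (fun ξ : ℝ ↦ ‖G ξ‖) (𝓝[>] 0) (𝓝 0) := by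
    refine squeeze_zero' (.of_forall fun _ ↦ norm_nonneg _) hGle ?_
    have hpow : Tendsto (fun ξ : ℝ ↦ ξ ^ (k - p.order)) (𝓝 0) (𝓝 0) :=
      (continuous_pow _).tendsto' 0 0 (zero_pow (Nat.sub_ne_zero_of_lt hd))
    simpa using (hpow.const_mul C).mono_left nhdsWithin_le_nhds
  have hGcont : ContinuousAt G 0 := (hp.has_fpower_series_iterate_dslope_fslope _).continuousAt
  exact hp.iterate_dslope_fslope_ne_zero hp0 <| norm_eq_zero.1 <|
    tendsto_nhds_unique ((hGcont.tendsto.comp hreal).norm) hGlim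

end Holomorphic

theorem stmt1_general (r : ℝ) (hr : 0 < r) (n : ℕ) (M : ℝ) (f : ℂ → ℂ)
    (hf : DifferentiableOn ℂ f {ζ : ℂ | 0 < ‖ζ‖ ∧ ‖ζ‖ < r})
    (hbound : ∀ ζ : ℂ, 0 < ‖ζ‖ → ‖ζ‖ < r →
      ‖f ζ‖ ≤ M / ‖ζ‖ ^ n)
    (q : ℕ) (C η : ℝ) (hη : 0 < η)
    (hdecay : ∀ ξ : ℝ, 0 < ξ → ξ < η → ‖f ξ‖ ≤ C * ξ ^ q) :
    ∀ ζ : ℂ, 0 < ‖ζ‖ → ‖ζ‖ ≤ r / 2 →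
      ‖f ζ‖ ≤ 2 * M * (‖ζ‖ / r) ^ q / ‖ζ‖ ^ n := by
  intro ζ hζ0 hζr
  have hpunct : ball (0 : ℂ) r \ {0} = {ζ : ℂ | 0 < ‖ζ‖ ∧ ‖ζ‖ < r} := by ext; simp [and_comm]
  obtain ⟨F, hFd, hFM, hFf⟩ := exists_differentiableOn_ball_eq_of_norm_le
    (g := fun z ↦ z ^ n * f z) hr (hpunct ▸ (differentiableOn_pow n).mul hf) <| by
      rw [hpunct]
      rintro z ⟨hz0, hzr⟩
      rw [norm_mul, norm_pow, ← le_div_iff₀' (by positivity)]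
      exact hbound z hz0 hzr
  have hFdecay : ∀ᶠ ξ : ℝ in 𝓝[>] 0, ‖F ξ‖ ≤ C * ξ ^ (q + n) := by
    filter_upwards [Ioo_mem_nhdsGT hη] with ξ ⟨hξ0, hξη⟩
    rw [hFf _ (ofReal_ne_zero.2 hξ0.ne'), norm_mul, norm_pow, norm_real,
      Real.norm_of_nonneg hξ0.le, pow_add]
    nlinarith [hdecay ξ hξ0 hξη, pow_pos hξ0 n]
  obtain ⟨p, hp⟩ := hFd.analyticAt (ball_mem_nhds 0 hr)
  have hsum : HasSum (fun i ↦ ζ ^ i • p.coeff i) (F ζ) := by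
    simpa using hFd.hasSum_coeff_of_mem_ball hp (mem_ball_zero_iff.2 (by linarith))
  have hM : 0 ≤ M := (norm_nonneg _).trans (hFM 0 (mem_ball_self hr))
  have hx : ‖ζ‖ / r ≤ 1 / 2 := by rw [div_le_iff₀ hr]; linarith
  have hFζ : ‖F ζ‖ ≤ 2 * M * (‖ζ‖ / r) ^ q := calc
    ‖F ζ‖ ≤ M * (‖ζ‖ / r) ^ q / (1 - ‖ζ‖ / r) := hsum.norm_le_geometric_of_apply_eq_zero
        (fun k hk ↦ hp.coeff_eq_zero_of_eventually_norm_le hFdecay (by omega))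
        (hp.norm_coeff_le_of_forall_norm_le hr hFd hFM) (by linarith)
    _ ≤ M * (‖ζ‖ / r) ^ q / (1 / 2) := by gcongr; linarith
    _ = 2 * M * (‖ζ‖ / r) ^ q := by ring
  rw [hFf ζ (norm_pos_iff.1 hζ0), norm_mul, norm_pow] at hFζ
  rwa [le_div_iff₀' (by positivity)]

theorem stmt1 (r : ℝ) (hr : 0 < r) (n : ℕ) (M : ℝ) (hM : 0 < M) (f : ℂ → ℂ)
    (hf : DifferentiableOn ℂ f {ζ : ℂ | 0 < ‖ζ‖ ∧ ‖ζ‖ < r})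
    (hbound : ∀ ζ : ℂ, 0 < ‖ζ‖ → ‖ζ‖ < r →
      ‖f ζ‖ ≤ M / ‖ζ‖ ^ n)
    (q : ℕ) (hq : n ≤ q) (C η : ℝ) (hC : 0 < C) (hη : 0 < η)
    (hdecay : ∀ ξ : ℝ, 0 < ξ → ξ < η → ‖f ξ‖ ≤ C * ξ ^ q) :
    ∀ ζ : ℂ, 0 < ‖ζ‖ → ‖ζ‖ ≤ r / 2 →
      ‖f ζ‖ ≤ 2 * M * (‖ζ‖ / r) ^ q / ‖ζ‖ ^ n :=
  stmt1_general r hr n M f hf hbound q C η hη hdecay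
end

section
/- Let U ⊆ ℂ^k be a connected open set and let f : U → ℂ be holomorphic. If there is a nonempty open set O ⊆ ℝ^k such that the set {x + 0·i : x ∈ O} (real points with imaginary part zero) is contained in U and f vanishes on it, then f vanishes identically on U. -/
open Complex Set

theorem stmt2 (k : ℕ) (U : Set (Fin k → ℂ)) (hU : IsOpen U) (hUc : IsConnected U)
    (f : (Fin k → ℂ) → ℂ) (hf : DifferentiableOn ℂ f U)
    (O : Set (Fin k → ℝ)) (hO : IsOpen O) (hOne : O.Nonempty)
    (hsub : ∀ x ∈ O, (fun i => (x i : ℂ)) ∈ U)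
    (hvan : ∀ x ∈ O, f (fun i => (x i : ℂ)) = 0) :
    ∀ z ∈ U, f z = 0 := by
  obtain ⟨x₀, hx₀⟩ := hOne
  set c : Fin k → ℂ := fun i => (x₀ i : ℂ) with hc
  have hcU : c ∈ U := hsub x₀ hx₀
  obtain ⟨ε₁, hε₁, hball₁⟩ := Metric.isOpen_iff.1 hU c hcU
  obtain ⟨ε₂, hε₂, hball₂⟩ := Metric.isOpen_iff.1 hO x₀ hx₀
  set ε := min ε₁ ε₂ with hεdef
  have hεpos : 0 < ε := lt_min hε₁ hε₂
  have hballU : Metric.ball c ε ⊆ U :=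
    (Metric.ball_subset_ball (min_le_left _ _)).trans hball₁
  have key : ∀ j : ℕ, j ≤ k → ∀ z, z ∈ Metric.ball c ε →
      (∀ i : Fin k, j ≤ (i : ℕ) → (z i).im = 0) → f z = 0 := by
    intro j
    induction j with
    | zero =>
      intro _ z hz him
      have hreal : ∀ i, z i = ((z i).re : ℂ) := fun i =>
        Complex.ext rfl (by simp [him i (Nat.zero_le _)])
      have hmem : (fun i => (z i).re) ∈ O := by
        apply hball₂
        rw [Metric.mem_ball, dist_pi_lt_iff hε₂]
        intro i
        have h1 : dist ((z i).re) (x₀ i) ≤ dist (z i) (c i) := by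
          rw [Real.dist_eq, Complex.dist_eq]
          simpa [hc, Complex.sub_re] using Complex.abs_re_le_norm (z i - c i)
        calc dist ((z i).re) (x₀ i) ≤ dist (z i) (c i) := h1
          _ ≤ dist z c := dist_le_pi_dist z c i
          _ < ε := Metric.mem_ball.1 hz
          _ ≤ ε₂ := min_le_right _ _
      have h0 := hvan _ hmem
      calc f z = f (fun i => ((z i).re : ℂ)) := by
            congr 1; funext i; exact hreal i
        _ = 0 := h0
    | succ j IH =>
      intro hjk z hz him
      have hj : j < k := hjk
      set j' : Fin k := ⟨j, hj⟩ with hj'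
      set g : ℂ → ℂ := fun w => f (Function.update z j' w) with hg
      have hzc : dist z c < ε := Metric.mem_ball.1 hz
      have hupd : ∀ w : ℂ, dist w (c j') < ε →
          Function.update z j' w ∈ Metric.ball c ε := by
        intro w hw
        rw [Metric.mem_ball, dist_pi_lt_iff hεpos]
        intro i
        rcases eq_or_ne i j' with h | h
        · subst h; simpa [Function.update_self] using hw
        · rw [Function.update_of_ne h]
          exact lt_of_le_of_lt (dist_le_pi_dist z c i) hzc
      have hud : Differentiable ℂ (fun w : ℂ => Function.update z j' w) := by
        rw [differentiable_pi]
        intro i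
        rcases eq_or_ne i j' with h | h
        · subst h; simp only [Function.update_self]; exact differentiable_id
        · simp only [Function.update_of_ne h]
          exact differentiable_const _
      have hgdiff : DifferentiableOn ℂ g (Metric.ball (c j') ε) :=
        hf.comp hud.differentiableOn
          (fun w hw => hballU (hupd w (Metric.mem_ball.1 hw)))
      have hganal : AnalyticOnNhd ℂ g (Metric.ball (c j') ε) :=
        hgdiff.analyticOnNhd Metric.isOpen_ball
      have hzero : ∀ r : ℝ, dist r (x₀ j') < ε → g ((r : ℝ) : ℂ) = 0 := by
        intro r hr
        have hdist : dist ((r : ℝ) : ℂ) (c j') < ε := by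
          simpa [hc, Complex.isometry_ofReal.dist_eq] using hr
        apply IH hj.le _ (hupd _ hdist)
        intro i hi
        rcases eq_or_ne i j' with h | h
        · subst h; simp [Function.update_self]
        · rw [Function.update_of_ne h]
          apply him i
          have hne : (i : ℕ) ≠ j := fun hh => h (Fin.ext (by simp [hj', hh]))
          omega
      have hfreq : ∃ᶠ w in nhdsWithin (c j') {(c j')}ᶜ, g w = 0 := by
        rw [Filter.frequently_iff]
        intro s hs
        rw [Metric.mem_nhdsWithin_iff] at hs
        obtain ⟨δ, hδ, hsub'⟩ := hs
        set t := min δ ε / 2 with htdef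
        have ht : 0 < t := by positivity
        have htδ : t < δ := by
          have : min δ ε ≤ δ := min_le_left _ _
          simp only [htdef]; linarith
        have htε : t < ε := by
          have : min δ ε ≤ ε := min_le_right _ _
          simp only [htdef]; linarith
        refine ⟨((x₀ j' + t : ℝ) : ℂ), hsub' ⟨?_, ?_⟩, ?_⟩
        · rw [Metric.mem_ball]
          have : dist ((x₀ j' + t : ℝ) : ℂ) (c j') = |t| := by
            simp [hc, Complex.isometry_ofReal.dist_eq, Real.dist_eq]
          rw [this, abs_of_pos ht]
          exact htδ
        · simp only [mem_compl_iff, mem_singleton_iff, hc]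
          intro hcontra
          have : x₀ j' + t = x₀ j' := Complex.ofReal_injective hcontra
          linarith
        · apply hzero
          rw [Real.dist_eq]
          simpa [abs_of_pos ht] using htε
      have heq : EqOn g 0 (Metric.ball (c j') ε) :=
        hganal.eqOn_zero_of_preconnected_of_frequently_eq_zero
          (convex_ball _ _).isPreconnected (Metric.mem_ball_self hεpos) hfreq
      have hzj : z j' ∈ Metric.ball (c j') ε :=
        Metric.mem_ball.2 (lt_of_le_of_lt (dist_le_pi_dist z c j') hzc)
      have := heq hzj
      simpa [hg, Function.update_eq_self] using this
  have hev : f =ᶠ[nhds c] 0 := by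
    filter_upwards [Metric.ball_mem_nhds c hεpos] with z hz
    exact key k le_rfl z hz (fun i hi => absurd i.isLt (not_lt.2 hi))
  -- Lemma A: if f vanishes near a point of a ball contained in U, it vanishes on the ball
  have lemA : ∀ (p : Fin k → ℂ) (R : ℝ), Metric.ball p R ⊆ U →
      ∀ w ∈ Metric.ball p R, (∀ᶠ y in nhds w, f y = 0) →
      ∀ z ∈ Metric.ball p R, f z = 0 := by
    intro p R hRU w hw hwev z hzmem
    set v : Fin k → ℂ := z - w with hv
    set L : ℂ → (Fin k → ℂ) := fun t => w + t • v with hL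
    have hLcont : Continuous L := by
      apply continuous_const.add
      exact continuous_id.smul continuous_const
    set T : Set ℂ := L ⁻¹' (Metric.ball p R) with hT
    have hTopen : IsOpen T := Metric.isOpen_ball.preimage hLcont
    have hTconv : Convex ℝ T := by
      intro t₁ h₁ t₂ h₂ a b ha hb hab
      have hmem : a • L t₁ + b • L t₂ ∈ Metric.ball p R :=
        (convex_ball p R) h₁ h₂ ha hb hab
      have heq : L (a • t₁ + b • t₂) = a • L t₁ + b • L t₂ := by
        simp only [hL]
        have h1 : a • (w + t₁ • v) = a • w + (a • t₁) • v := by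
          rw [smul_add, smul_assoc]
        have h2 : b • (w + t₂ • v) = b • w + (b • t₂) • v := by
          rw [smul_add, smul_assoc]
        rw [h1, h2, add_smul]
        rw [show a • w + (a • t₁) • v + (b • w + (b • t₂) • v)
            = (a • w + b • w) + ((a • t₁) • v + (b • t₂) • v) by abel]
        rw [← add_smul a b w, hab, one_smul]
      rwa [hT, mem_preimage, heq]
    have h0T : (0 : ℂ) ∈ T := by
      simp only [hT, mem_preimage, hL, zero_smul, add_zero]
      exact hw
    have h1T : (1 : ℂ) ∈ T := by
      simp only [hT, mem_preimage, hL, one_smul, hv]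
      simpa using hzmem
    set g : ℂ → ℂ := fun t => f (L t) with hg
    have hgd : DifferentiableOn ℂ g T := by
      apply hf.comp
      · apply Differentiable.differentiableOn
        apply (differentiable_const _).add
        exact differentiable_id.smul_const v
      · exact fun t ht => hRU ht
    have hganal : AnalyticOnNhd ℂ g T := hgd.analyticOnNhd hTopen
    have hg0 : g =ᶠ[nhds (0 : ℂ)] 0 := by
      have hL0 : L 0 = w := by simp [hL]
      have htend : Filter.Tendsto L (nhds 0) (nhds w) := by
        rw [← hL0]; exact hLcont.continuousAt
      filter_upwards [htend.eventually hwev] with t ht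
      exact ht
    have := hganal.eqOn_zero_of_preconnected_of_eventuallyEq_zero
      hTconv.isPreconnected h0T hg0 h1T
    have hL1 : L 1 = z := by simp [hL, hv]
    simpa [hg, hL1] using this
  -- clopen argument
  set u : Set (Fin k → ℂ) := {x | f =ᶠ[nhds x] 0} with hu
  have Uu : U ⊆ u := by
    apply hUc.isPreconnected.subset_of_closure_inter_subset
    · exact isOpen_setOf_eventually_nhds
    · exact ⟨c, hcU, hev⟩
    · rintro x ⟨hxcl, hxU⟩
      obtain ⟨R, hR, hRU⟩ := Metric.isOpen_iff.1 hU x hxU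
      obtain ⟨w, hwu, hwd⟩ := Metric.mem_closure_iff.1 hxcl R hR
      have hwmem : w ∈ Metric.ball x R := Metric.mem_ball.2 (by rwa [dist_comm])
      have hzero : ∀ z ∈ Metric.ball x R, f z = 0 := lemA x R hRU w hwmem hwu
      show f =ᶠ[nhds x] 0
      filter_upwards [Metric.ball_mem_nhds x hR] with y hy
      exact hzero y hy
  intro z hz
  simpa using mem_of_mem_nhds (Uu hz)
end

section
/- For n ∈ ℕ with n ≥ 1, let S_n = {ζ ∈ ℂ : |arg ζ| < 1/n, 0 < |ζ| < 1/n} and let H_n be the Banach space of holomorphic f : S_n → ℂ with norm ‖f‖_n = sup_{ζ ∈ S_n} |ζ|^n |f(ζ)| < ∞. Then the restriction map H_n → H_{n+1}, f ↦ f|_{S_{n+1}}, is a compact linear operator: every sequence in the unit ball of H_n has a subsequence whose restrictions converge in the norm of H_{n+1}. -/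
/-!
The functions of the unit ball of `H_n` are bounded by `|ζ|⁻ⁿ`, hence locally uniformly bounded
on the open sector `S_n`; by the Schwarz lemma they are equicontinuous there, and Arzelà–Ascoli
(Montel's theorem) extracts a subsequence converging locally uniformly on `S_n` to a holomorphic
`g` with `|ζ|ⁿ |g ζ| ≤ 1`. The extra factor `|ζ|` in the weight of `H_{n+1}` makes
`|ζ|ⁿ⁺¹ |f ζ - g ζ| ≤ 2 |ζ|` small near `0`, while the rest of `S_{n+1}` lies in a compact polar
rectangle inside `S_n`, on which the convergence is uniform.
-/

open Complex Set Filter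

/-- The sector `S_n`. -/
def sector (n : ℕ) : Set ℂ :=
  {ζ : ℂ | |Complex.arg ζ| < 1 / n ∧ 0 < ‖ζ‖ ∧ ‖ζ‖ < 1 / n}

open Real Topology Uniformity UniformConvergence

theorem ArzelaAscoli.exists_subseq_tendstoLocallyUniformly {X α : Type*} [TopologicalSpace X]
    [WeaklyLocallyCompactSpace X] [SigmaCompactSpace X] [UniformSpace α] [T2Space α]
    [IsCountablyGenerated (𝓤 α)] {F : ℕ → X → α} (hF : Equicontinuous F)
    (hQ : ∀ x, ∃ Q, IsCompact Q ∧ ∀ i, F i x ∈ Q) :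
    ∃ φ : ℕ → ℕ, StrictMono φ ∧ ∃ g : X → α, TendstoLocallyUniformly (F ∘ φ) g atTop := by
  let K := CompactExhaustion.choice X
  let 𝔖 := range K
  -- Uniform convergence on the pieces of a compact exhaustion is a first countable topology,
  -- so compactness there yields a convergent subsequence.
  have : IsCountablyGenerated (𝓤 (X →ᵤ[𝔖] α)) :=
    UniformOnFun.isCountablyGenerated_uniformity 𝔖 mem_range_self (fun _ _ h => K.subset h)
      (by rintro _ ⟨n, rfl⟩; exact ⟨n, le_rfl⟩)
  have hcpt : IsCompact (closure (range (UniformOnFun.ofFun 𝔖 ∘ F))) :=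
    ArzelaAscoli.isCompact_closure_of_isClosedEmbedding (F := UniformOnFun.toFun 𝔖)
      (by rintro _ ⟨n, rfl⟩; exact K.isCompact n) IsClosedEmbedding.id
      (fun S _ => (equicontinuous_iff_range.mp hF).equicontinuousOn S)
      (fun _ _ x _ => (hQ x).imp fun Q hQ => ⟨hQ.1, forall_mem_range.mpr hQ.2⟩)
  obtain ⟨g, -, φ, hφ, hg⟩ := hcpt.tendsto_subseq fun n => subset_closure (mem_range_self n)
  refine ⟨φ, hφ, UniformOnFun.toFun 𝔖 g, fun u hu x => ?_⟩
  obtain ⟨n, hn⟩ := K.exists_mem_nhds x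
  exact ⟨K n, hn, UniformOnFun.tendsto_iff_tendstoUniformlyOn.mp hg _ (mem_range_self n) u hu⟩

theorem Complex.equicontinuousAt_of_eventually_norm_le {ι : Type*} {F : ι → ℂ → ℂ} {x : ℂ}
    {C : ℝ} (hd : ∀ᶠ z in 𝓝 x, ∀ i, DifferentiableAt ℂ (F i) z)
    (hb : ∀ᶠ z in 𝓝 x, ∀ i, ‖F i z‖ ≤ C) : EquicontinuousAt F x := by
  obtain ⟨r, hr, hball⟩ := Metric.eventually_nhds_iff_ball.mp (hd.and hb)
  have hlip : ∀ z ∈ Metric.ball x r, ∀ i, dist (F i x) (F i z) ≤ 2 * C / r * dist z x := by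
    intro z hz i
    rw [dist_comm]
    refine dist_le_div_mul_dist_of_mapsTo_ball
      (fun w hw => ((hball w hw).1 i).differentiableWithinAt) (fun w hw => ?_) hz
    rw [Metric.mem_closedBall, dist_eq_norm]
    linarith [norm_sub_le (F i w) (F i x), (hball w hw).2 i,
      (hball x (Metric.mem_ball_self hr)).2 i]
  refine Metric.equicontinuousAt_of_continuity_modulus (fun z => 2 * C / r * dist z x) ?_ F
    (eventually_of_mem (Metric.ball_mem_nhds x hr) hlip)
  simpa using ((continuous_id.dist (continuous_const (y := x))).tendsto x).const_mul (2 * C / r)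

theorem Complex.exists_subseq_tendstoLocallyUniformlyOn {U : Set ℂ} (hU : IsOpen U)
    {F : ℕ → ℂ → ℂ} (hd : ∀ i, DifferentiableOn ℂ (F i) U)
    (hb : ∀ x ∈ U, ∃ C, ∀ᶠ z in 𝓝 x, ∀ i, ‖F i z‖ ≤ C) :
    ∃ φ : ℕ → ℕ, StrictMono φ ∧ ∃ g : ℂ → ℂ, TendstoLocallyUniformlyOn (F ∘ φ) g atTop U := by
  have : LocallyCompactSpace U := hU.locallyCompactSpace
  have hF : Equicontinuous fun i (x : U) => F i x := by
    refine (equicontinuous_restrict_iff F).mpr fun x hx => ?_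
    obtain ⟨C, hC⟩ := hb x hx
    refine (Complex.equicontinuousAt_of_eventually_norm_le ?_ hC).equicontinuousWithinAt U
    filter_upwards [hU.mem_nhds hx] with z hz i using (hd i z hz).differentiableAt (hU.mem_nhds hz)
  obtain ⟨φ, hφ, g, hg⟩ := ArzelaAscoli.exists_subseq_tendstoLocallyUniformly hF fun x => by
    obtain ⟨C, hC⟩ := hb x x.2
    exact ⟨Metric.closedBall 0 C, isCompact_closedBall 0 C,
      fun i => by simpa using hC.self_of_nhds i⟩
  refine ⟨φ, hφ, Function.extend Subtype.val g 0, ?_⟩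
  rw [tendstoLocallyUniformlyOn_iff_tendstoLocallyUniformly_comp_coe,
    Function.extend_comp Subtype.val_injective]
  exact hg

lemma exists_eventually_norm_le_of_norm_pow_mul_le {ι : Type*} {F : ι → ℂ → ℂ} {U : Set ℂ}
    {n : ℕ} {x : ℂ} (hU : U ∈ 𝓝 x) (hx : x ≠ 0) (hF : ∀ i, ∀ z ∈ U, ‖z‖ ^ n * ‖F i z‖ ≤ 1) :
    ∃ C, ∀ᶠ z in 𝓝 x, ∀ i, ‖F i z‖ ≤ C := by
  refine ⟨((‖x‖ / 2) ^ n)⁻¹, ?_⟩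
  filter_upwards [hU, continuous_norm.continuousAt.eventually_const_lt
    (half_lt_self (norm_pos_iff.mpr hx))] with z hzU hz i
  rw [← one_div, le_div_iff₀ (by positivity)]
  calc ‖F i z‖ * (‖x‖ / 2) ^ n ≤ ‖F i z‖ * ‖z‖ ^ n := by gcongr
    _ ≤ 1 := by rw [mul_comm]; exact hF i z hzU

theorem eventually_norm_pow_succ_mul_norm_sub_le {ι : Type*} {l : Filter ι} {S : Set ℂ} {n : ℕ}
    {F : ι → ℂ → ℂ} {g : ℂ → ℂ} (hS : ∀ ζ ∈ S, ‖ζ‖ ≤ 1)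
    (hF : ∀ i, ∀ ζ ∈ S, ‖ζ‖ ^ n * ‖F i ζ‖ ≤ 1) (hg : ∀ ζ ∈ S, ‖ζ‖ ^ n * ‖g ζ‖ ≤ 1)
    (hunif : ∀ r > 0, TendstoUniformlyOn F g l {ζ ∈ S | r ≤ ‖ζ‖}) {ε : ℝ} (hε : 0 < ε) :
    ∀ᶠ i in l, ∀ ζ ∈ S, ‖ζ‖ ^ (n + 1) * ‖F i ζ - g ζ‖ ≤ ε := by
  filter_upwards [Metric.tendstoUniformlyOn_iff.mp (hunif (ε / 2) (half_pos hε)) ε hε]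
    with i hi ζ hζ
  rcases le_or_gt (ε / 2) ‖ζ‖ with hfar | hnear
  · calc ‖ζ‖ ^ (n + 1) * ‖F i ζ - g ζ‖ ≤ 1 * dist (g ζ) (F i ζ) := by
          rw [dist_comm, dist_eq_norm]
          gcongr
          exact pow_le_one₀ (norm_nonneg ζ) (hS ζ hζ)
      _ ≤ ε := by rw [one_mul]; exact (hi ζ ⟨hζ, hfar⟩).le
  · calc ‖ζ‖ ^ (n + 1) * ‖F i ζ - g ζ‖
        ≤ ‖ζ‖ * (‖ζ‖ ^ n * ‖F i ζ‖ + ‖ζ‖ ^ n * ‖g ζ‖) := by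
          rw [pow_succ', mul_assoc, ← mul_add]
          gcongr
          exact norm_sub_le _ _
      _ ≤ ε / 2 * 2 := by gcongr; linarith [hF i ζ hζ, hg ζ hζ]
      _ = ε := by ring

theorem Complex.mem_polarCoord_symm_image_prod {R Θ : Set ℝ} (hR : R ⊆ Ioi 0)
    (hΘ : Θ ⊆ Ioc (-π) π) {z : ℂ} :
    z ∈ Complex.polarCoord.symm '' R ×ˢ Θ ↔ ‖z‖ ∈ R ∧ arg z ∈ Θ := by
  constructor
  · rintro ⟨⟨r, θ⟩, ⟨hr, hθ⟩, rfl⟩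
    have hr0 : 0 < r := hR hr
    simp only [Complex.polarCoord_symm_apply, ofReal_cos, ofReal_sin]
    rw [arg_mul_cos_add_sin_mul_I hr0 (hΘ hθ), norm_mul, norm_cos_add_sin_mul_I, mul_one,
      norm_real, Real.norm_of_nonneg hr0.le]
    exact ⟨hr, hθ⟩
  · rintro ⟨hr, hθ⟩
    refine ⟨(‖z‖, arg z), ⟨hr, hθ⟩, ?_⟩
    simp only [Complex.polarCoord_symm_apply, ofReal_cos, ofReal_sin, norm_mul_cos_add_sin_mul_I]

lemma Icc_neg_one_div_subset_Ioo_neg_pi_pi (n : ℕ) : Icc (-(1 / n : ℝ)) (1 / n) ⊆ Ioo (-π) π := by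
  have : (1 / n : ℝ) < π := by
    linarith [one_div (n : ℝ) ▸ Nat.cast_inv_le_one (α := ℝ) n, Real.pi_gt_three]
  exact Icc_subset_Ioo (by linarith) this

theorem sector_eq_polarCoord_symm_image (n : ℕ) :
    sector n = Complex.polarCoord.symm '' Ioo (0 : ℝ) (1 / n) ×ˢ Ioo (-(1 / n : ℝ)) (1 / n) := by
  ext ζ
  rw [Complex.mem_polarCoord_symm_image_prod Ioo_subset_Ioi_self (Ioo_subset_Icc_self.trans <|
    (Icc_neg_one_div_subset_Ioo_neg_pi_pi n).trans Ioo_subset_Ioc_self)]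
  simp only [sector, mem_ofPred_eq, mem_Ioo, abs_lt]
  tauto

theorem isOpen_sector (n : ℕ) : IsOpen (sector n) := by
  rw [sector_eq_polarCoord_symm_image]
  exact Complex.polarCoord.isOpen_image_symm_of_subset_target (isOpen_Ioo.prod isOpen_Ioo)
    (Set.prod_mono Ioo_subset_Ioi_self
      (Ioo_subset_Icc_self.trans (Icc_neg_one_div_subset_Ioo_neg_pi_pi n)))

lemma one_div_natCast_succ_lt {n : ℕ} (hn : 1 ≤ n) : (1 / (n + 1 : ℕ) : ℝ) < 1 / n :=
  one_div_lt_one_div_of_lt (by exact_mod_cast hn) (by push_cast; linarith)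

theorem sector_succ_subset {n : ℕ} (hn : 1 ≤ n) : sector (n + 1) ⊆ sector n := by
  have h := (one_div_natCast_succ_lt hn).le
  simp only [sector_eq_polarCoord_symm_image]
  exact image_mono (Set.prod_mono (Ioo_subset_Ioo_right h) (Ioo_subset_Ioo (neg_le_neg h) h))

theorem exists_isCompact_superset_sector_succ_inter {n : ℕ} (hn : 1 ≤ n) {r : ℝ} (hr : 0 < r) :
    ∃ K, IsCompact K ∧ K ⊆ sector n ∧ {ζ ∈ sector (n + 1) | r ≤ ‖ζ‖} ⊆ K := by
  set a : ℝ := 1 / (n + 1 : ℕ)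
  have ha := one_div_natCast_succ_lt hn
  have hΘ : Icc (-a) a ⊆ Ioo (-π) π := Icc_neg_one_div_subset_Ioo_neg_pi_pi (n + 1)
  have hR : Icc r a ⊆ Ioi 0 := fun ρ hρ => hr.trans_le hρ.1
  refine ⟨Complex.polarCoord.symm '' Icc r a ×ˢ Icc (-a) a,
    (isCompact_Icc.prod isCompact_Icc).image_of_continuousOn
      (Complex.polarCoord.continuousOn_symm.mono (Set.prod_mono hR hΘ)), ?_, ?_⟩
  · rw [sector_eq_polarCoord_symm_image]
    exact image_mono (Set.prod_mono (Icc_subset_Ioo hr ha) (Icc_subset_Ioo (by linarith) ha))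
  · rintro ζ ⟨hζ, hrζ⟩
    rw [Complex.mem_polarCoord_symm_image_prod hR (hΘ.trans Ioo_subset_Ioc_self)]
    rw [sector_eq_polarCoord_symm_image, Complex.mem_polarCoord_symm_image_prod Ioo_subset_Ioi_self
      (Ioo_subset_Icc_self.trans <| hΘ.trans Ioo_subset_Ioc_self)] at hζ
    exact ⟨⟨hrζ, hζ.1.2.le⟩, Ioo_subset_Icc_self hζ.2⟩

/-- The restriction map `H_n → H_{n+1}` is compact: every sequence in the unit
ball of `H_n` has a subsequence whose restrictions converge in the `H_{n+1}` norm. -/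
theorem stmt5 (n : ℕ) (hn : 1 ≤ n) (f : ℕ → ℂ → ℂ)
    (hol : ∀ p, DifferentiableOn ℂ (f p) (sector n))
    (ball : ∀ p, ∀ ζ ∈ sector n, (‖ζ‖) ^ n * ‖f p ζ‖ ≤ 1) :
    ∃ φ : ℕ → ℕ, StrictMono φ ∧ ∃ g : ℂ → ℂ,
      DifferentiableOn ℂ g (sector (n + 1)) ∧
      (∃ M : ℝ, ∀ ζ ∈ sector (n + 1),
        (‖ζ‖) ^ (n + 1) * ‖g ζ‖ ≤ M) ∧
      (∀ ε > 0, ∃ q₀ : ℕ, ∀ q ≥ q₀, ∀ ζ ∈ sector (n + 1),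
        (‖ζ‖) ^ (n + 1) * ‖f (φ q) ζ - g ζ‖ ≤ ε) := by
  obtain ⟨φ, hφ, g, hlim⟩ := Complex.exists_subseq_tendstoLocallyUniformlyOn (isOpen_sector n) hol
    fun x hx => exists_eventually_norm_le_of_norm_pow_mul_le ((isOpen_sector n).mem_nhds hx)
      (norm_pos_iff.mp hx.2.1) ball
  have hg : ∀ ζ ∈ sector n, ‖ζ‖ ^ n * ‖g ζ‖ ≤ 1 := fun ζ hζ =>
    le_of_tendsto ((hlim.tendsto_at hζ).norm.const_mul _) (.of_forall fun q => ball (φ q) ζ hζ)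
  have hsub := sector_succ_subset hn
  have hnorm : ∀ ζ ∈ sector (n + 1), ‖ζ‖ ≤ 1 := fun ζ hζ =>
    hζ.2.2.le.trans (by rw [one_div]; exact Nat.cast_inv_le_one _)
  have hdiff : DifferentiableOn ℂ g (sector n) :=
    hlim.differentiableOn (.of_forall fun q => hol (φ q)) (isOpen_sector n)
  refine ⟨φ, hφ, g, hdiff.mono hsub, ⟨1, fun ζ hζ => ?_⟩, fun ε hε => eventually_atTop.mp ?_⟩
  · rw [pow_succ', mul_assoc]
    exact mul_le_one₀ (hnorm ζ hζ) (by positivity) (hg ζ (hsub hζ))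
  refine eventually_norm_pow_succ_mul_norm_sub_le hnorm (fun q ζ hζ => ball (φ q) ζ (hsub hζ))
    (fun ζ hζ => hg ζ (hsub hζ)) (fun r hr => ?_) hε
  obtain ⟨K, hK, hKn, hK'⟩ := exists_isCompact_superset_sector_succ_inter hn hr
  exact ((tendstoLocallyUniformlyOn_iff_forall_isCompact (isOpen_sector n)).mp hlim K hKn hK).mono
    hK'
end

section
/- Let r > 0, p₀ ∈ ℕ, M > 0, and let (g_n) be a sequence of holomorphic functions on the punctured disk D* = {ζ : 0 < |ζ| < r} with |g_n(ζ)| ≤ M/|ζ|^{p₀} for all n and all ζ ∈ D*. Suppose that for every q ∈ ℕ there exists n₀ such that for all n ≥ n₀ there exist C_n, η_n > 0 with |g_n(ξ)| ≤ C_n ξ^q for all real ξ ∈ (0, η_n). Then for every q ∈ ℕ there exists n₀ such that for all n ≥ n₀ and all ζ with 0 < |ζ| ≤ r/2: |g_n(ζ)| ≤ 2M |ζ/r|^q / |ζ|^{p₀}. In particular g_n(ζ) → 0 for every fixed ζ ∈ D* with |ζ| ≤ r/2. -/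
/-!
After multiplication by `ζ ^ p₀`, each `g n` becomes bounded by `M` on the punctured disc, so it
extends holomorphically across `0`. Decay like `ξ ^ q` along the positive real axis forces this
extension to vanish to order at least `q` at `0`: otherwise it behaves like `c ξ ^ k` with `c ≠ 0`
and `k < q` there. The Schwarz lemma of order `q` on the disc of radius `r` then bounds it by
`M (‖ζ‖ / r) ^ q`, and for `‖ζ‖ ≤ r / 2` these bounds tend to `0` as `q` grows.
-/

open Complex Filter Topology Metric Set Asymptotics

theorem natCast_le_analyticOrderAt_of_isBigO {E : Type*} [NormedAddCommGroup E] [NormedSpace ℂ E]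
    {f : ℂ → E} {q : ℕ} (hf : AnalyticAt ℂ f 0)
    (hdecay : (fun ξ : ℝ => f ξ) =O[𝓝[>] 0] (fun ξ => ξ ^ q)) :
    (q : ℕ∞) ≤ analyticOrderAt f 0 := by
  by_contra! hlt
  obtain ⟨k, hk⟩ := ENat.ne_top_iff_exists.1 (hlt.trans (ENat.natCast_lt_top q)).ne
  rw [← hk, ENat.natCast_lt_natCast] at hlt
  obtain ⟨g, hg, hg0, hfg⟩ := hf.analyticOrderAt_eq_natCast.1 hk.symm
  have hofReal : Tendsto (fun ξ : ℝ => (ξ : ℂ)) (𝓝[>] 0) (𝓝 0) :=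
    (continuous_ofReal.tendsto' 0 0 ofReal_zero).mono_left nhdsWithin_le_nhds
  refine hg0 (tendsto_nhds_unique (hg.continuousAt.tendsto.comp hofReal) ?_)
  -- on the positive axis `g = ξ⁻¹ ^ k • f = O(ξ ^ (q - k))`
  obtain ⟨C, hC⟩ := hdecay.bound
  refine squeeze_zero_norm' (a := fun ξ : ℝ => C * ξ ^ (q - k)) ?_ ?_
  · filter_upwards [hC, hofReal.eventually hfg, self_mem_nhdsWithin] with ξ hξ hfξ (hξ0 : 0 < ξ)
    rw [hfξ, sub_zero, norm_smul, norm_pow, norm_real, Real.norm_of_nonneg hξ0.le, norm_pow,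
      Real.norm_of_nonneg hξ0.le, ← Nat.sub_add_cancel hlt.le, pow_add] at hξ
    exact le_of_mul_le_mul_left (by rw [Function.comp_apply]; linarith) (pow_pos hξ0 k)
  · have hpow := (continuous_pow (q - k)).tendsto' (0 : ℝ) 0 (zero_pow (by omega))
    simpa using (hpow.const_mul C).mono_left nhdsWithin_le_nhds

theorem norm_le_mul_div_pow_of_natCast_le_analyticOrderAt {E : Type*} [NormedAddCommGroup E]
    [NormedSpace ℂ E] [CompleteSpace E] {f : ℂ → E} {r M : ℝ} {n : ℕ}
    (hd : DifferentiableOn ℂ f (ball 0 r)) (hmaps : MapsTo f (ball 0 r) (closedBall 0 M))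
    (hn : ((n + 1 : ℕ) : ℕ∞) ≤ analyticOrderAt f 0) {z : ℂ} (hz : z ∈ ball 0 r) :
    ‖f z‖ ≤ M * (‖z‖ / r) ^ (n + 1) := by
  have hf : AnalyticAt ℂ f 0 := hd.analyticAt (ball_mem_nhds 0 (nonempty_ball.1 ⟨z, hz⟩))
  have hf0 : f 0 = 0 := apply_eq_zero_of_analyticOrderAt_ne_zero
    (ne_bot_of_le_ne_bot (by simp) hn)
  obtain ⟨g, hg, hfg⟩ := (natCast_le_analyticOrderAt hf).1 hn
  have hlittle : (f · - f 0) =o[𝓝 0] (fun w ↦ ‖w - 0‖ ^ n) := by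
    have hwg : (fun w : ℂ => w • g w) =o[𝓝 0] (fun _ => (1 : ℝ)) :=
      (isLittleO_one_iff ℝ).2 <| by
        simpa using (continuous_id.tendsto 0).smul hg.continuousAt.tendsto
    refine ((isBigO_refl (fun w : ℂ => w ^ n) _).norm_right.smul_isLittleO hwg).congr' ?_ ?_
    · filter_upwards [hfg] with w hw
      simp [hw, hf0, pow_succ, mul_smul]
    · simp
  simpa [hf0] using dist_le_mul_div_pow_of_mapsTo_ball_of_isLittleO hd (hf0 ▸ hmaps) hlittle hz

theorem norm_le_mul_div_pow_of_isBigO {F : ℂ → ℂ} {r M : ℝ} {q : ℕ}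
    (hF : DifferentiableOn ℂ F (ball 0 r \ {0})) (hFM : ∀ w ∈ ball (0 : ℂ) r \ {0}, ‖F w‖ ≤ M)
    (hdecay : (fun ξ : ℝ => F ξ) =O[𝓝[>] 0] (fun ξ => ξ ^ q))
    {z : ℂ} (hz : z ∈ ball 0 r \ {0}) :
    ‖F z‖ ≤ M * (‖z‖ / r) ^ q := by
  have hball : ball (0 : ℂ) r ∈ 𝓝 0 := ball_mem_nhds 0 (nonempty_ball.1 ⟨z, hz.1⟩)
  set H := Function.update F 0 (limUnder (𝓝[≠] 0) F)
  have hH : DifferentiableOn ℂ H (ball 0 r) :=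
    differentiableOn_update_limUnder_of_bddAbove hball hF ⟨M, forall_mem_image.2 hFM⟩
  have hHF : ∀ w ≠ 0, H w = F w := fun w hw => Function.update_of_ne hw _ _
  rcases q with _ | n
  · simpa using hFM z hz
  have hHq : ((n + 1 : ℕ) : ℕ∞) ≤ analyticOrderAt H 0 := by
    refine natCast_le_analyticOrderAt_of_isBigO (hH.analyticAt hball) (hdecay.congr' ?_ .rfl)
    filter_upwards [self_mem_nhdsWithin] with ξ (hξ : 0 < ξ)
    exact (hHF _ (ofReal_ne_zero.2 hξ.ne')).symm
  have hH0 : H 0 = 0 := apply_eq_zero_of_analyticOrderAt_ne_zero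
    (ne_bot_of_le_ne_bot (by simp) hHq)
  have hmaps : MapsTo H (ball 0 r) (closedBall 0 M) := by
    intro w hw
    rcases eq_or_ne w 0 with rfl | hw0
    · simpa [hH0] using (norm_nonneg _).trans (hFM z hz)
    · simpa [hHF w hw0] using hFM w ⟨hw, hw0⟩
  simpa [hHF z hz.2] using norm_le_mul_div_pow_of_natCast_le_analyticOrderAt hH hmaps hHq hz.1

theorem norm_le_mul_div_pow_div_pow_of_isBigO {g : ℂ → ℂ} {r M : ℝ} {p q : ℕ}
    (hg : DifferentiableOn ℂ g (ball 0 r \ {0}))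
    (hgM : ∀ w ∈ ball (0 : ℂ) r \ {0}, ‖g w‖ ≤ M / ‖w‖ ^ p)
    (hdecay : (fun ξ : ℝ => g ξ) =O[𝓝[>] 0] (fun ξ => ξ ^ q))
    {z : ℂ} (hz : z ∈ ball 0 r \ {0}) :
    ‖g z‖ ≤ M * (‖z‖ / r) ^ q / ‖z‖ ^ p := by
  have hpos : ∀ w ∈ ball (0 : ℂ) r \ {0}, 0 < ‖w‖ ^ p := fun w hw =>
    pow_pos (norm_pos_iff.2 hw.2) p
  have hF : DifferentiableOn ℂ (fun w => w ^ p * g w) (ball 0 r \ {0}) :=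
    (differentiableOn_pow p).mul hg
  have hFM : ∀ w ∈ ball (0 : ℂ) r \ {0}, ‖w ^ p * g w‖ ≤ M := fun w hw => by
    rw [norm_mul, norm_pow, ← le_div_iff₀' (hpos w hw)]
    exact hgM w hw
  have hFdecay : (fun ξ : ℝ => (ξ : ℂ) ^ p * g ξ) =O[𝓝[>] 0] (fun ξ => ξ ^ q) := by
    have hpow : (fun ξ : ℝ => (ξ : ℂ) ^ p) =O[𝓝[>] 0] (fun _ => (1 : ℝ)) :=
      ((Continuous.tendsto (by fun_prop) 0).isBigO_one ℝ).mono nhdsWithin_le_nhds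
    simpa using hpow.mul hdecay
  rw [le_div_iff₀ (hpos z hz), mul_comm, ← norm_pow, ← norm_mul]
  exact norm_le_mul_div_pow_of_isBigO hF hFM hFdecay hz

theorem tendsto_zero_of_forall_eventually_norm_le_mul_pow {E : Type*} [SeminormedAddCommGroup E]
    {u : ℕ → E} {A t : ℝ} (ht₀ : 0 ≤ t) (ht₁ : t < 1)
    (h : ∀ q : ℕ, ∀ᶠ n in atTop, ‖u n‖ ≤ A * t ^ q) :
    Tendsto u atTop (𝓝 0) := by
  rw [NormedAddGroup.tendsto_nhds_zero]
  intro ε hε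
  have hlim : Tendsto (fun q : ℕ => A * t ^ q) atTop (𝓝 0) := by
    simpa using (tendsto_pow_atTop_nhds_zero_of_lt_one ht₀ ht₁).const_mul A
  obtain ⟨q, hq⟩ := (hlim.eventually (gt_mem_nhds hε)).exists
  filter_upwards [h q] with n hn using hn.trans_lt hq

theorem stmt13 (r : ℝ) (hr : 0 < r) (p₀ : ℕ) (M : ℝ) (hM : 0 < M)
    (g : ℕ → ℂ → ℂ)
    (hol : ∀ n, DifferentiableOn ℂ (g n) {ζ : ℂ | 0 < ‖ζ‖ ∧ ‖ζ‖ < r})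
    (hbound : ∀ n, ∀ ζ : ℂ, 0 < ‖ζ‖ → ‖ζ‖ < r →
      ‖g n ζ‖ ≤ M / ‖ζ‖ ^ p₀)
    (hdecay : ∀ q : ℕ, ∃ n₀ : ℕ, ∀ n ≥ n₀, ∃ C > 0, ∃ η > 0,
      ∀ ξ : ℝ, 0 < ξ → ξ < η → ‖g n (ξ : ℂ)‖ ≤ C * ξ ^ q) :
    (∀ q : ℕ, ∃ n₀ : ℕ, ∀ n ≥ n₀, ∀ ζ : ℂ, 0 < ‖ζ‖ → ‖ζ‖ ≤ r / 2 →
      ‖g n ζ‖ ≤ 2 * M * (‖ζ‖ / r) ^ q / ‖ζ‖ ^ p₀) ∧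
    (∀ ζ : ℂ, 0 < ‖ζ‖ → ‖ζ‖ ≤ r / 2 →
      Tendsto (fun n => g n ζ) atTop (nhds 0)) := by
  have hdisc : {ζ : ℂ | 0 < ‖ζ‖ ∧ ‖ζ‖ < r} = ball 0 r \ {0} := by
    ext ζ
    simp [norm_pos_iff, and_comm]
  have hrate : ∀ q : ℕ, ∃ n₀ : ℕ, ∀ n ≥ n₀, ∀ ζ : ℂ, 0 < ‖ζ‖ → ‖ζ‖ ≤ r / 2 →
      ‖g n ζ‖ ≤ 2 * M * (‖ζ‖ / r) ^ q / ‖ζ‖ ^ p₀ := by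
    intro q
    obtain ⟨n₀, hn₀⟩ := hdecay q
    refine ⟨n₀, fun n hn ζ hζ hζr => ?_⟩
    obtain ⟨C, -, η, hη, hC⟩ := hn₀ n hn
    have hgO : (fun ξ : ℝ => g n ξ) =O[𝓝[>] 0] (fun ξ => ξ ^ q) := by
      refine IsBigO.of_bound C ?_
      filter_upwards [Ioo_mem_nhdsGT hη] with ξ hξ
      simpa [abs_of_pos hξ.1] using hC ξ hξ.1 hξ.2
    have hζ' : ζ ∈ ball 0 r \ {0} := hdisc ▸ ⟨hζ, by linarith⟩
    calc ‖g n ζ‖ ≤ M * (‖ζ‖ / r) ^ q / ‖ζ‖ ^ p₀ :=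
          norm_le_mul_div_pow_div_pow_of_isBigO (hdisc ▸ hol n)
            (fun w hw => hbound n w (hdisc ▸ hw).1 (hdisc ▸ hw).2) hgO hζ'
      _ ≤ 2 * M * (‖ζ‖ / r) ^ q / ‖ζ‖ ^ p₀ := by gcongr; linarith
  refine ⟨hrate, fun ζ hζ hζr => ?_⟩
  refine tendsto_zero_of_forall_eventually_norm_le_mul_pow (A := 2 * M / ‖ζ‖ ^ p₀)
    (t := ‖ζ‖ / r) (by positivity) ((div_lt_one (by linarith)).2 (by linarith)) fun q => ?_
  obtain ⟨n₀, hn₀⟩ := hrate q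
  filter_upwards [eventually_ge_atTop n₀] with n hn
  simpa [div_mul_eq_mul_div, mul_right_comm] using hn₀ n hn ζ hζ hζr
end
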